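/- arXiv:2302.13059 — 3 statements merged into one kernel-verified Lean document; each statement's English description precedes it below -/
import Mathlib

section
/- The metric space (Sym⁺(m), d_LE) is complete. -/
open Matrix Filter

/-- The matrix exponential on `m × m` real matrices. -/
noncomputable def mexp {m : ℕ} (A : Matrix (Fin m) (Fin m) ℝ) : Matrix (Fin m) (Fin m) ℝ :=
  NormedSpace.exp A

/-- The Frobenius norm of an `m × m` real matrix. -/
noncomputable def frobNorm {m : ℕ} (A : Matrix (Fin m) (Fin m) ℝ) : ℝ :=
  Real.sqrt (∑ i, ∑ j, (A i j) ^ 2)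

/-!
`mlog` turns a `d_LE`-Cauchy sequence of positive definite matrices into a Frobenius-Cauchy
sequence of symmetric matrices, which converges to a symmetric `A` because symmetric matrices form
a closed subset of a complete space. Then `exp A` is positive definite, and since `exp` is
injective on symmetric matrices, `mlog (exp A) = A`; so the sequence converges to `exp A`.
-/

namespace Matrix

theorem isClosed_setOf_isSymm {n α : Type*} [TopologicalSpace α] [T2Space α] :
    IsClosed {A : Matrix n n α | A.IsSymm} :=
  isClosed_eq continuous_id.matrix_transpose continuous_id

open scoped Matrix.Norms.Frobenius in
theorem frobenius_norm_eq_sqrt_sum_sq {m n : Type*} [Fintype m] [Fintype n] (A : Matrix m n ℝ) :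
    ‖A‖ = Real.sqrt (∑ i, ∑ j, A i j ^ 2) := by
  simp [frobenius_norm_def, Real.sqrt_eq_rpow]

section exp

variable {n : Type*} [Fintype n] [DecidableEq n]

open scoped MatrixOrder Matrix.Norms.L2Operator

theorem posDef_exp {A : Matrix n n ℝ} (hA : A.IsHermitian) : (NormedSpace.exp A).PosDef :=
  isStrictlyPositive_iff_posDef.mp ⟨IsSelfAdjoint.exp_nonneg hA, isUnit_exp A⟩

theorem exp_injOn_isHermitian :
    Set.InjOn NormedSpace.exp {A : Matrix n n ℝ | A.IsHermitian} := fun A hA B hB h => by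
  rw [← CFC.log_exp A hA, ← CFC.log_exp B hB, h]

end exp

end Matrix

section frobNorm

open scoped Matrix.Norms.Frobenius

theorem frobNorm_eq_norm {m : ℕ} (A : Matrix (Fin m) (Fin m) ℝ) : frobNorm A = ‖A‖ :=
  (frobenius_norm_eq_sqrt_sum_sq A).symm

theorem exists_isSymm_tendsto_frobNorm_of_cauchy {m : ℕ} {L : ℕ → Matrix (Fin m) (Fin m) ℝ}
    (hL : ∀ ε : ℝ, 0 < ε → ∃ N : ℕ, ∀ k ≥ N, ∀ l ≥ N, frobNorm (L k - L l) < ε)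
    (hL_symm : ∀ n, (L n).IsSymm) :
    ∃ A : Matrix (Fin m) (Fin m) ℝ, A.IsSymm ∧
      Tendsto (fun n => frobNorm (L n - A)) atTop (nhds 0) := by
  simp only [frobNorm_eq_norm, ← dist_eq_norm] at hL ⊢
  obtain ⟨A, hA⟩ := cauchySeq_tendsto_of_complete (Metric.cauchySeq_iff.mpr hL)
  exact ⟨A, isClosed_setOf_isSymm.mem_of_tendsto hA (.of_forall hL_symm),
    tendsto_iff_dist_tendsto_zero.mp hA⟩

end frobNorm

theorem logEuclidean_complete_general (m : ℕ)
    (mlog : Matrix (Fin m) (Fin m) ℝ → Matrix (Fin m) (Fin m) ℝ)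
    (hmlog_symm : ∀ S : Matrix (Fin m) (Fin m) ℝ, S.PosDef → (mlog S).IsSymm)
    (hmlog_exp : ∀ S : Matrix (Fin m) (Fin m) ℝ, S.PosDef → mexp (mlog S) = S)
    (dLE : Matrix (Fin m) (Fin m) ℝ → Matrix (Fin m) (Fin m) ℝ → ℝ)
    (hdLE : ∀ S₁ S₂, dLE S₁ S₂ = frobNorm (mlog S₁ - mlog S₂))
    (S : ℕ → Matrix (Fin m) (Fin m) ℝ)
    (hSpd : ∀ n, (S n).PosDef)
    (hCauchy : ∀ ε : ℝ, 0 < ε → ∃ N : ℕ, ∀ k ≥ N, ∀ l ≥ N, dLE (S k) (S l) < ε) :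
    ∃ T : Matrix (Fin m) (Fin m) ℝ, T.PosDef ∧
      Tendsto (fun n => dLE (S n) T) atTop (nhds 0) := by
  obtain ⟨A, hA_symm, hA⟩ := exists_isSymm_tendsto_frobNorm_of_cauchy (L := fun n => mlog (S n))
    (by simpa only [hdLE] using hCauchy) fun n => hmlog_symm _ (hSpd n)
  have hA_herm : A.IsHermitian := isHermitian_iff_isSymm.mpr hA_symm
  have hT : (mexp A).PosDef := posDef_exp hA_herm
  have hlog : mlog (mexp A) = A := exp_injOn_isHermitian
    (isHermitian_iff_isSymm.mpr (hmlog_symm _ hT)) hA_herm (hmlog_exp _ hT)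
  refine ⟨mexp A, hT, ?_⟩
  simpa only [hdLE, hlog] using hA

/-- The metric space `(Sym⁺(m), d_LE)` is complete: every `d_LE`-Cauchy sequence of
symmetric positive definite matrices converges, in the metric `d_LE`, to a symmetric
positive definite matrix. -/
theorem logEuclidean_complete (m : ℕ) (hm : 0 < m)
    (mlog : Matrix (Fin m) (Fin m) ℝ → Matrix (Fin m) (Fin m) ℝ)
    (hmlog_symm : ∀ S : Matrix (Fin m) (Fin m) ℝ, S.PosDef → (mlog S).IsSymm)
    (hmlog_exp : ∀ S : Matrix (Fin m) (Fin m) ℝ, S.PosDef → mexp (mlog S) = S)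
    (dLE : Matrix (Fin m) (Fin m) ℝ → Matrix (Fin m) (Fin m) ℝ → ℝ)
    (hdLE : ∀ S₁ S₂, dLE S₁ S₂ = frobNorm (mlog S₁ - mlog S₂))
    (S : ℕ → Matrix (Fin m) (Fin m) ℝ)
    (hSpd : ∀ n, (S n).PosDef)
    (hCauchy : ∀ ε : ℝ, 0 < ε → ∃ N : ℕ, ∀ k ≥ N, ∀ l ≥ N, dLE (S k) (S l) < ε) :
    ∃ T : Matrix (Fin m) (Fin m) ℝ, T.PosDef ∧
      Tendsto (fun n => dLE (S n) T) atTop (nhds 0) :=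
  logEuclidean_complete_general m mlog hmlog_symm hmlog_exp dLE hdLE S hSpd hCauchy
end

section
/- For any S₁, S₂ ∈ Sym⁺(m), the curve γ(t) defined as the unique element of Sym⁺(m) satisfying chol(L(γ(t))) = (1−t)·chol(L(S₁)) + t·chol(L(S₂)), t ∈ [0,1], satisfies γ(0) = S₁, γ(1) = S₂, and d_LC(γ(s), γ(t)) = |s − t| · d_LC(S₁, S₂) for all s, t ∈ [0,1]; hence (Sym⁺(m), d_LC) is a geodesic metric space. -/
/-!
By uniqueness of the Cholesky factor, `S ↦ chol(L(S))` is a bijection from `Sym⁺(m)` onto the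
lower triangular matrices, with inverse `C ↦ Λ Λᵀ`, where `Λ` is `C` with its diagonal
exponentiated. So `d_LC` is the Frobenius distance transported along this bijection, and `γ` is
the preimage of the segment from `chol(L(S₁))` to `chol(L(S₂))`.
-/

open Matrix Set

/-- For a lower triangular matrix `L`, `chol(L) := ⌊L⌋ + mlog(𝔻(L))` is the sum of the strictly
lower triangular part of `L` and the diagonal matrix whose `k`-th diagonal entry is
`log(L k k)`. -/
noncomputable def cholMap {m : ℕ} (L : Matrix (Fin m) (Fin m) ℝ) : Matrix (Fin m) (Fin m) ℝ :=
  Matrix.of fun i j => if j < i then L i j else if i = j then Real.log (L i i) else 0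

namespace Matrix

variable {n : Type*} [Fintype n] [LinearOrder n]

theorem IsLowerTriangular.mul_apply_self {R : Type*} [NonUnitalNonAssocSemiring R]
    {A B : Matrix n n R} (hA : A.IsLowerTriangular) (hB : B.IsLowerTriangular) (i : n) :
    (A * B) i i = A i i * B i i := by
  rw [mul_apply, Finset.sum_eq_single i]
  · intro k _ hki
    rcases hki.lt_or_gt with hlt | hgt
    · rw [hB hlt, mul_zero]
    · rw [hA hgt, zero_mul]
  · simp

theorem IsLowerTriangular.isUnit_det {K : Type*} [Field K] {L : Matrix n n K}
    (hL : L.IsLowerTriangular) (hdiag : ∀ i, L i i ≠ 0) : IsUnit L.det := by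
  rw [det_of_isLowerTriangular L hL]
  exact (Finset.prod_ne_zero_iff.mpr fun i _ => hdiag i).isUnit

theorem IsLowerTriangular.posDef_mul_transpose {L : Matrix n n ℝ} (hL : L.IsLowerTriangular)
    (hdiag : ∀ i, 0 < L i i) : (L * Lᵀ).PosDef := by
  have hunit : IsUnit L := (isUnit_iff_isUnit_det L).mpr (hL.isUnit_det fun i => (hdiag i).ne')
  simpa [conjTranspose_eq_transpose_of_trivial] using
    PosDef.mul_conjTranspose_self L (vecMul_injective_of_isUnit hunit)

theorem IsLowerTriangular.eq_one_of_mul_transpose_eq_one {A : Matrix n n ℝ}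
    (hA : A.IsLowerTriangular) (hdiag : ∀ i, 0 < A i i) (horth : A * Aᵀ = 1) : A = 1 := by
  -- `Aᵀ = A⁻¹` is lower triangular too, so `A` is diagonal with `A i i ^ 2 = 1`.
  have hinv : A⁻¹ = Aᵀ := inv_eq_right_inv horth
  have hAT : Aᵀ.IsLowerTriangular := by
    have := hA.isUnit_det fun i => (hdiag i).ne'
    have := A.invertibleOfIsUnitDet this
    exact hinv ▸ blockTriangular_inv_of_blockTriangular hA
  have hdiag_one : ∀ i, A i i = 1 := by
    intro i
    have hsq : A i i * A i i = 1 := by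
      simpa [hA.mul_apply_self hAT i] using congrFun (congrFun horth i) i
    nlinarith [hdiag i]
  ext i j
  rcases lt_trichotomy i j with hij | rfl | hij
  · simp [hA hij, one_apply_ne hij.ne]
  · simp [hdiag_one i]
  · simpa [one_apply_ne hij.ne'] using hAT hij

theorem IsLowerTriangular.eq_of_mul_transpose_eq {L₁ L₂ : Matrix n n ℝ}
    (hL₁ : L₁.IsLowerTriangular) (hdiag₁ : ∀ i, 0 < L₁ i i)
    (hL₂ : L₂.IsLowerTriangular) (hdiag₂ : ∀ i, 0 < L₂ i i)
    (h : L₁ * L₁ᵀ = L₂ * L₂ᵀ) : L₁ = L₂ := by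
  have hdet₂ := hL₂.isUnit_det fun i => (hdiag₂ i).ne'
  have := L₂.invertibleOfIsUnitDet hdet₂
  set A := L₂⁻¹ * L₁
  have hL₁_eq : L₁ = L₂ * A := (mul_nonsing_inv_cancel_left L₂ L₁ hdet₂).symm
  have hA : A.IsLowerTriangular := (blockTriangular_inv_of_blockTriangular hL₂).mul hL₁
  have hAdiag : ∀ i, 0 < A i i := by
    intro i
    have := hL₂.mul_apply_self hA i
    rw [← hL₁_eq] at this
    exact pos_of_mul_pos_right (this ▸ hdiag₁ i) (hdiag₂ i).le
  have horth : A * Aᵀ = 1 := by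
    have hdet₂T : IsUnit L₂ᵀ.det := by rwa [det_transpose]
    calc A * Aᵀ = L₂⁻¹ * (L₁ * L₁ᵀ) * L₂ᵀ⁻¹ := by
          simp only [A, transpose_mul, transpose_nonsing_inv, Matrix.mul_assoc]
      _ = 1 := by
          rw [h, Matrix.mul_assoc, Matrix.mul_assoc, mul_nonsing_inv _ hdet₂T, Matrix.mul_one,
            nonsing_inv_mul _ hdet₂]
  rw [hL₁_eq, hA.eq_one_of_mul_transpose_eq_one hAdiag horth, Matrix.mul_one]

end Matrix

noncomputable def cholMapInv {m : ℕ} (C : Matrix (Fin m) (Fin m) ℝ) : Matrix (Fin m) (Fin m) ℝ :=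
  Matrix.of fun i j => if j < i then C i j else if i = j then Real.exp (C i i) else 0

noncomputable def ofLogCholesky {m : ℕ} (C : Matrix (Fin m) (Fin m) ℝ) :
    Matrix (Fin m) (Fin m) ℝ :=
  cholMapInv C * (cholMapInv C)ᵀ

section LogCholesky

variable {m : ℕ}

theorem cholMap_isLowerTriangular (L : Matrix (Fin m) (Fin m) ℝ) : (cholMap L).IsLowerTriangular :=
  fun i j (hij : i < j) => by simp [cholMap, hij.not_gt, hij.ne]

theorem cholMapInv_isLowerTriangular (C : Matrix (Fin m) (Fin m) ℝ) :
    (cholMapInv C).IsLowerTriangular :=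
  fun i j (hij : i < j) => by simp [cholMapInv, hij.not_gt, hij.ne]

theorem cholMapInv_apply_self_pos (C : Matrix (Fin m) (Fin m) ℝ) (i : Fin m) :
    0 < cholMapInv C i i := by
  simp [cholMapInv, Real.exp_pos]

theorem cholMap_cholMapInv {C : Matrix (Fin m) (Fin m) ℝ} (hC : C.IsLowerTriangular) :
    cholMap (cholMapInv C) = C := by
  ext i j
  rcases lt_trichotomy i j with hij | rfl | hij
  · simp [cholMap, cholMapInv, hij.not_gt, hij.ne, hC hij]
  · simp [cholMap, cholMapInv]
  · simp [cholMap, cholMapInv, hij]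

theorem cholMapInv_cholMap {L : Matrix (Fin m) (Fin m) ℝ} (hL : L.IsLowerTriangular)
    (hdiag : ∀ i, 0 < L i i) : cholMapInv (cholMap L) = L := by
  ext i j
  rcases lt_trichotomy i j with hij | rfl | hij
  · simp [cholMap, cholMapInv, hij.not_gt, hij.ne, hL hij]
  · simp [cholMap, cholMapInv, Real.exp_log (hdiag i)]
  · simp [cholMap, cholMapInv, hij]

theorem posDef_ofLogCholesky (C : Matrix (Fin m) (Fin m) ℝ) : (ofLogCholesky C).PosDef :=
  (cholMapInv_isLowerTriangular C).posDef_mul_transpose (cholMapInv_apply_self_pos C)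

theorem frobNorm_smul (c : ℝ) (A : Matrix (Fin m) (Fin m) ℝ) :
    frobNorm (c • A) = |c| * frobNorm A := by
  have hsum : ∑ i, ∑ j, ((c • A) i j) ^ 2 = c ^ 2 * ∑ i, ∑ j, (A i j) ^ 2 := by
    simp [Finset.mul_sum, mul_pow]
  rw [frobNorm, frobNorm, hsum, Real.sqrt_mul (sq_nonneg c), Real.sqrt_sq_eq_abs]

end LogCholesky

theorem logCholesky_geodesic_general (m : ℕ)
    (Lfac : Matrix (Fin m) (Fin m) ℝ → Matrix (Fin m) (Fin m) ℝ)
    (hLfac_lower : ∀ S : Matrix (Fin m) (Fin m) ℝ, S.PosDef →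
      ∀ i j : Fin m, i < j → Lfac S i j = 0)
    (hLfac_diag : ∀ S : Matrix (Fin m) (Fin m) ℝ, S.PosDef → ∀ i : Fin m, 0 < Lfac S i i)
    (hLfac_mul : ∀ S : Matrix (Fin m) (Fin m) ℝ, S.PosDef → S = Lfac S * (Lfac S)ᵀ)
    (dLC : Matrix (Fin m) (Fin m) ℝ → Matrix (Fin m) (Fin m) ℝ → ℝ)
    (hdLC : ∀ S₁ S₂, dLC S₁ S₂ = frobNorm (cholMap (Lfac S₁) - cholMap (Lfac S₂)))
    (S₁ S₂ : Matrix (Fin m) (Fin m) ℝ) (hS₁ : S₁.PosDef) (hS₂ : S₂.PosDef) :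
    ∃ γ : ℝ → Matrix (Fin m) (Fin m) ℝ,
      -- γ(t) lies in Sym⁺(m) and satisfies the defining equation
      (∀ t ∈ Icc (0 : ℝ) 1, (γ t).PosDef ∧
        cholMap (Lfac (γ t)) = (1 - t) • cholMap (Lfac S₁) + t • cholMap (Lfac S₂)) ∧
      -- γ(t) is the unique such element of Sym⁺(m)
      (∀ t ∈ Icc (0 : ℝ) 1, ∀ P : Matrix (Fin m) (Fin m) ℝ, P.PosDef →
        cholMap (Lfac P) = (1 - t) • cholMap (Lfac S₁) + t • cholMap (Lfac S₂) → P = γ t) ∧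
      γ 0 = S₁ ∧ γ 1 = S₂ ∧
      (∀ s ∈ Icc (0 : ℝ) 1, ∀ t ∈ Icc (0 : ℝ) 1,
        dLC (γ s) (γ t) = |s - t| * dLC S₁ S₂) := by
  have hLfac_eq : ∀ L : Matrix (Fin m) (Fin m) ℝ, L.IsLowerTriangular → (∀ i, 0 < L i i) →
      Lfac (L * Lᵀ) = L := fun L hL hdiag => by
    have hP := hL.posDef_mul_transpose hdiag
    exact IsLowerTriangular.eq_of_mul_transpose_eq (hLfac_lower _ hP) (hLfac_diag _ hP) hL hdiag
      (hLfac_mul _ hP).symm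
  have hcholMap_of : ∀ C : Matrix (Fin m) (Fin m) ℝ, C.IsLowerTriangular →
      cholMap (Lfac (ofLogCholesky C)) = C := fun C hC => by
    rw [ofLogCholesky, hLfac_eq _ (cholMapInv_isLowerTriangular C) (cholMapInv_apply_self_pos C),
      cholMap_cholMapInv hC]
  have hof_cholMap : ∀ P : Matrix (Fin m) (Fin m) ℝ, P.PosDef →
      ofLogCholesky (cholMap (Lfac P)) = P := fun P hP => by
    rw [ofLogCholesky, cholMapInv_cholMap (hLfac_lower P hP) (hLfac_diag P hP), ← hLfac_mul P hP]
  set C₁ := cholMap (Lfac S₁)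
  set C₂ := cholMap (Lfac S₂)
  have hC : ∀ t : ℝ, ((1 - t) • C₁ + t • C₂).IsLowerTriangular := fun t _ _ hij => by
    simp [C₁, C₂, cholMap_isLowerTriangular _ hij]
  refine ⟨fun t => ofLogCholesky ((1 - t) • C₁ + t • C₂),
    fun t _ => ⟨posDef_ofLogCholesky _, hcholMap_of _ (hC t)⟩, fun t _ P hP hPt => ?_,
    by simpa using hof_cholMap S₁ hS₁, by simpa using hof_cholMap S₂ hS₂, fun s _ t _ => ?_⟩
  · rw [← hof_cholMap P hP, hPt]
  · have hdiff : (1 - s) • C₁ + s • C₂ - ((1 - t) • C₁ + t • C₂) = (t - s) • (C₁ - C₂) := by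
      module
    rw [hdLC, hdLC, hcholMap_of _ (hC s), hcholMap_of _ (hC t), hdiff, frobNorm_smul,
      abs_sub_comm]

/-- For any `S₁, S₂ ∈ Sym⁺(m)`, the curve `γ(t)` defined as the unique element of `Sym⁺(m)`
satisfying `chol(L(γ(t))) = (1−t)·chol(L(S₁)) + t·chol(L(S₂))`, `t ∈ [0,1]`, exists, is
unique, satisfies `γ(0) = S₁`, `γ(1) = S₂`, and
`d_LC(γ(s), γ(t)) = |s − t| · d_LC(S₁, S₂)` for all `s, t ∈ [0,1]`; hence `(Sym⁺(m), d_LC)`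
is a geodesic metric space. -/
theorem logCholesky_geodesic (m : ℕ) (hm : 0 < m)
    (Lfac : Matrix (Fin m) (Fin m) ℝ → Matrix (Fin m) (Fin m) ℝ)
    (hLfac_lower : ∀ S : Matrix (Fin m) (Fin m) ℝ, S.PosDef →
      ∀ i j : Fin m, i < j → Lfac S i j = 0)
    (hLfac_diag : ∀ S : Matrix (Fin m) (Fin m) ℝ, S.PosDef → ∀ i : Fin m, 0 < Lfac S i i)
    (hLfac_mul : ∀ S : Matrix (Fin m) (Fin m) ℝ, S.PosDef → S = Lfac S * (Lfac S)ᵀ)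
    (dLC : Matrix (Fin m) (Fin m) ℝ → Matrix (Fin m) (Fin m) ℝ → ℝ)
    (hdLC : ∀ S₁ S₂, dLC S₁ S₂ = frobNorm (cholMap (Lfac S₁) - cholMap (Lfac S₂)))
    (S₁ S₂ : Matrix (Fin m) (Fin m) ℝ) (hS₁ : S₁.PosDef) (hS₂ : S₂.PosDef) :
    ∃ γ : ℝ → Matrix (Fin m) (Fin m) ℝ,
      -- γ(t) lies in Sym⁺(m) and satisfies the defining equation
      (∀ t ∈ Icc (0 : ℝ) 1, (γ t).PosDef ∧
        cholMap (Lfac (γ t)) = (1 - t) • cholMap (Lfac S₁) + t • cholMap (Lfac S₂)) ∧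
      -- γ(t) is the unique such element of Sym⁺(m)
      (∀ t ∈ Icc (0 : ℝ) 1, ∀ P : Matrix (Fin m) (Fin m) ℝ, P.PosDef →
        cholMap (Lfac P) = (1 - t) • cholMap (Lfac S₁) + t • cholMap (Lfac S₂) → P = γ t) ∧
      γ 0 = S₁ ∧ γ 1 = S₂ ∧
      (∀ s ∈ Icc (0 : ℝ) 1, ∀ t ∈ Icc (0 : ℝ) 1,
        dLC (γ s) (γ t) = |s - t| * dLC S₁ S₂) :=
  logCholesky_geodesic_general m Lfac hLfac_lower hLfac_diag hLfac_mul dLC hdLC S₁ S₂ hS₁ hS₂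
end

section
/- Existence and uniqueness of the Fréchet mean under the log-Cholesky metric (condition (A1) is automatically satisfied): let Y be a random element of Sym⁺(m) such that chol(L(Y)) is measurable and E‖chol(L(Y))‖_F² < ∞. Then the Fréchet function F(S) := E[d_LC(S, Y)²] is finite for every S ∈ Sym⁺(m) and has a unique minimizer μ over Sym⁺(m), characterized by chol(L(μ)) = E[chol(L(Y))]; moreover F(S) − F(μ) = d_LC(S, μ)² for every S ∈ Sym⁺(m). -/
open Matrix MeasureTheory

/-!
The map `S ↦ chol(L(S))` is a bijection from `Sym⁺(m)` onto the lower triangular matrices, with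
inverse `C ↦ cholExp C * (cholExp C)ᵀ`, and `d_LC` is the Frobenius distance after this map.
So `F(S)` is the mean squared Euclidean distance from `chol(L(S))` to the random point
`chol(L(Y))`, which splits entrywise into the squared distance to its mean `E[chol(L(Y))]` plus the
total variance. The mean is again lower triangular, so it is `chol(L(μ))` for a unique `μ`.
-/

open ProbabilityTheory

section Frobenius

variable {m : ℕ}

lemma frobNorm_sq (A : Matrix (Fin m) (Fin m) ℝ) : frobNorm A ^ 2 = ∑ i, ∑ j, A i j ^ 2 :=
  Real.sq_sqrt (by positivity)

lemma sq_apply_le_frobNorm_sq (A : Matrix (Fin m) (Fin m) ℝ) (i j : Fin m) :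
    A i j ^ 2 ≤ frobNorm A ^ 2 := by
  rw [frobNorm_sq]
  calc A i j ^ 2 ≤ ∑ j', A i j' ^ 2 :=
        Finset.single_le_sum (fun _ _ => sq_nonneg _) (Finset.mem_univ j)
    _ ≤ ∑ i', ∑ j', A i' j' ^ 2 :=
        Finset.single_le_sum (f := fun i' => ∑ j', A i' j' ^ 2)
          (fun _ _ => by positivity) (Finset.mem_univ i)

lemma frobNorm_sq_eq_zero_iff {A : Matrix (Fin m) (Fin m) ℝ} : frobNorm A ^ 2 = 0 ↔ A = 0 := by
  rw [frobNorm_sq, Fintype.sum_eq_zero_iff_of_nonneg fun i => by positivity]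
  simp only [funext_iff, Pi.zero_apply,
    Fintype.sum_eq_zero_iff_of_nonneg fun j => sq_nonneg _, pow_eq_zero_iff two_ne_zero]
  exact ⟨fun h => ext h, fun h i j => by simp [h]⟩

end Frobenius

namespace Matrix.IsLowerTriangular

variable {n : Type*} [Fintype n] [LinearOrder n]

lemma posDef_mul_transpose_s13 {L : Matrix n n ℝ} (hL : L.IsLowerTriangular)
    (d : ∀ i, 0 < L i i) : (L * Lᵀ).PosDef := by
  classical
  have hdet : IsUnit L.det := by
    rw [det_of_isLowerTriangular L hL]
    exact (Finset.prod_pos fun i _ => d i).ne'.isUnit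
  simpa using PosDef.mul_conjTranspose_self L
    (vecMul_injective_iff_isUnit.mpr ((isUnit_iff_isUnit_det L).mpr hdet))

variable [LocallyFiniteOrderBot n]

lemma mul_transpose_apply {L : Matrix n n ℝ} (hL : L.IsLowerTriangular)
    (i j : n) : (L * Lᵀ) i j = L i j * L j j + ∑ k ∈ Finset.Iio j, L i k * L j k := by
  classical
  rw [mul_apply, ← Finset.sum_subset (Finset.subset_univ (Finset.Iic j))
    fun k _ hk => by rw [transpose_apply, hL (i := j) (by simpa using hk), mul_zero],
    ← Finset.Iio_insert, Finset.sum_insert Finset.notMem_Iio_self]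
  simp only [transpose_apply]

lemma eq_of_mul_transpose_eq_s13 {L₁ L₂ : Matrix n n ℝ}
    (h₁ : L₁.IsLowerTriangular) (h₂ : L₂.IsLowerTriangular)
    (d₁ : ∀ i, 0 < L₁ i i) (d₂ : ∀ i, 0 < L₂ i i) (h : L₁ * L₁ᵀ = L₂ * L₂ᵀ) : L₁ = L₂ := by
  suffices ∀ j i, L₁ i j = L₂ i j from ext fun i j => this j i
  intro j
  induction j using WellFoundedLT.induction with
  | _ j IH =>
    have hcol : ∀ i, L₁ i j * L₁ j j = L₂ i j * L₂ j j := fun i => by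
      have e := congrFun (congrFun h i) j
      rwa [h₁.mul_transpose_apply, h₂.mul_transpose_apply,
        Finset.sum_congr rfl fun k hk => by
          rw [IH k (Finset.mem_Iio.mp hk) i, IH k (Finset.mem_Iio.mp hk) j],
        add_left_inj] at e
    have hdiag : L₁ j j = L₂ j j := (mul_self_inj (d₁ j).le (d₂ j).le).mp (hcol j)
    exact fun i => mul_right_cancel₀ (d₂ j).ne' (hdiag ▸ hcol i)

end Matrix.IsLowerTriangular

section CholMap

variable {m : ℕ}

noncomputable def cholExp (C : Matrix (Fin m) (Fin m) ℝ) : Matrix (Fin m) (Fin m) ℝ :=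
  of fun i j => if j < i then C i j else if i = j then Real.exp (C i i) else 0

lemma cholExp_isLowerTriangular (C : Matrix (Fin m) (Fin m) ℝ) :
    (cholExp C).IsLowerTriangular := fun i j (hij : i < j) => by
  simp [cholExp, hij.not_gt, hij.ne]

lemma cholExp_apply_self_pos (C : Matrix (Fin m) (Fin m) ℝ) (i : Fin m) : 0 < cholExp C i i := by
  simp [cholExp, Real.exp_pos]

lemma cholMap_apply_of_lt (L : Matrix (Fin m) (Fin m) ℝ) {i j : Fin m} (hij : i < j) :
    cholMap L i j = 0 := by
  simp [cholMap, hij.not_gt, hij.ne]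

lemma cholMap_cholExp {C : Matrix (Fin m) (Fin m) ℝ} (hC : C.IsLowerTriangular) :
    cholMap (cholExp C) = C := by
  ext i j
  rcases lt_trichotomy j i with hji | rfl | hij
  · simp [cholMap, cholExp, hji]
  · simp [cholMap, cholExp]
  · simp [cholMap, cholExp, hij.not_gt, hij.ne, hC (i := i) (j := j) hij]

lemma eq_of_cholMap_eq {L₁ L₂ : Matrix (Fin m) (Fin m) ℝ}
    (h₁ : L₁.IsLowerTriangular) (h₂ : L₂.IsLowerTriangular)
    (d₁ : ∀ i, 0 < L₁ i i) (d₂ : ∀ i, 0 < L₂ i i) (h : cholMap L₁ = cholMap L₂) : L₁ = L₂ := by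
  ext i j
  have hij := congrFun (congrFun h i) j
  rcases lt_trichotomy j i with hji | rfl | hij'
  · simpa [cholMap, hji] using hij
  · simpa [cholMap, Real.log_injOn_pos.eq_iff (d₁ j) (d₂ j)] using hij
  · rw [h₁ (i := i) hij', h₂ (i := i) hij']

end CholMap

section MeanSquaredDistance

variable {Ω : Type*} [MeasurableSpace Ω] {P : Measure Ω} {m : ℕ} {X : Ω → Matrix (Fin m) (Fin m) ℝ}

lemma memLp_two_apply_of_integrable_frobNorm_sq (hmeas : ∀ i j, Measurable fun ω => X ω i j)
    (hX : Integrable (fun ω => frobNorm (X ω) ^ 2) P) (i j : Fin m) :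
    MemLp (fun ω => X ω i j) 2 P := by
  refine (memLp_two_iff_integrable_sq (hmeas i j).aestronglyMeasurable).mpr
    (hX.mono' ((hmeas i j).pow_const 2).aestronglyMeasurable (ae_of_all _ fun ω => ?_))
  rw [Real.norm_of_nonneg (sq_nonneg _)]
  exact sq_apply_le_frobNorm_sq (X ω) i j

variable [IsProbabilityMeasure P]

lemma integral_const_sub_sq {f : Ω → ℝ} (hf : MemLp f 2 P) (a : ℝ) :
    ∫ ω, (a - f ω) ^ 2 ∂P = (a - P[f]) ^ 2 + Var[f; P] := by
  have hf' : MemLp (fun ω => a - f ω) 2 P := (memLp_const a).sub hf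
  rw [← variance_const_sub hf.aestronglyMeasurable a, variance_eq_sub hf',
    integral_sub (integrable_const a) (hf.integrable one_le_two), integral_const]
  simp

lemma integrable_frobNorm_sub_sq (hmeas : ∀ i j, Measurable fun ω => X ω i j)
    (hX : Integrable (fun ω => frobNorm (X ω) ^ 2) P) (A : Matrix (Fin m) (Fin m) ℝ) :
    Integrable (fun ω => frobNorm (A - X ω) ^ 2) P := by
  simp only [frobNorm_sq, Matrix.sub_apply]
  exact integrable_finsetSum _ fun i _ => integrable_finsetSum _ fun j _ =>
    ((memLp_const _).sub (memLp_two_apply_of_integrable_frobNorm_sq hmeas hX i j)).integrable_sq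

lemma integral_frobNorm_sub_sq (hmeas : ∀ i j, Measurable fun ω => X ω i j)
    (hX : Integrable (fun ω => frobNorm (X ω) ^ 2) P) (A : Matrix (Fin m) (Fin m) ℝ) :
    ∫ ω, frobNorm (A - X ω) ^ 2 ∂P =
      frobNorm (A - of fun i j => ∫ ω, X ω i j ∂P) ^ 2 + ∑ i, ∑ j, Var[fun ω => X ω i j; P] := by
  have hL2 := memLp_two_apply_of_integrable_frobNorm_sq hmeas hX
  have hsq : ∀ i j, Integrable (fun ω => (A i j - X ω i j) ^ 2) P := fun i j =>
    ((memLp_const (A i j)).sub (hL2 i j)).integrable_sq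
  simp only [frobNorm_sq, Matrix.sub_apply, of_apply, ← Finset.sum_add_distrib]
  rw [integral_finsetSum _ fun i _ => integrable_finsetSum _ fun j _ => hsq i j]
  refine Finset.sum_congr rfl fun i _ => ?_
  rw [integral_finsetSum _ fun j _ => hsq i j]
  exact Finset.sum_congr rfl fun j _ => integral_const_sub_sq (hL2 i j) (A i j)

end MeanSquaredDistance

theorem logCholesky_frechet_mean_general (m : ℕ)
    (Lfac : Matrix (Fin m) (Fin m) ℝ → Matrix (Fin m) (Fin m) ℝ)
    (hLfac_lower : ∀ S : Matrix (Fin m) (Fin m) ℝ, S.PosDef →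
      ∀ i j : Fin m, i < j → Lfac S i j = 0)
    (hLfac_diag : ∀ S : Matrix (Fin m) (Fin m) ℝ, S.PosDef → ∀ i : Fin m, 0 < Lfac S i i)
    (hLfac_mul : ∀ S : Matrix (Fin m) (Fin m) ℝ, S.PosDef → S = Lfac S * (Lfac S)ᵀ)
    {Ω : Type*} [MeasurableSpace Ω] (P : Measure Ω) [IsProbabilityMeasure P]
    (Y : Ω → Matrix (Fin m) (Fin m) ℝ)
    (hmeas : ∀ i j : Fin m, Measurable fun ω => cholMap (Lfac (Y ω)) i j)
    (hL2 : Integrable (fun ω => (frobNorm (cholMap (Lfac (Y ω)))) ^ 2) P)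
    (F : Matrix (Fin m) (Fin m) ℝ → ℝ)
    (hF : ∀ S, F S = ∫ ω, (frobNorm (cholMap (Lfac S) - cholMap (Lfac (Y ω)))) ^ 2 ∂P) :
    -- F is finite on Sym⁺(m) (the defining integrand is integrable)
    (∀ S : Matrix (Fin m) (Fin m) ℝ, S.PosDef →
      Integrable (fun ω => (frobNorm (cholMap (Lfac S) - cholMap (Lfac (Y ω)))) ^ 2) P) ∧
    -- there is a unique minimizer μ of F over Sym⁺(m), characterized by
    -- chol(L(μ)) = E[chol(L(Y))], and F(S) − F(μ) = d_LC(S,μ)² for every S ∈ Sym⁺(m)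
    (∃ μ : Matrix (Fin m) (Fin m) ℝ, μ.PosDef ∧
      cholMap (Lfac μ) = (Matrix.of fun i j => ∫ ω, cholMap (Lfac (Y ω)) i j ∂P) ∧
      (∀ S : Matrix (Fin m) (Fin m) ℝ, S.PosDef → F μ ≤ F S) ∧
      (∀ S : Matrix (Fin m) (Fin m) ℝ, S.PosDef → F S = F μ → S = μ) ∧
      (∀ S : Matrix (Fin m) (Fin m) ℝ, S.PosDef →
        F S - F μ = (frobNorm (cholMap (Lfac S) - cholMap (Lfac μ))) ^ 2)) := by
  set C : Matrix (Fin m) (Fin m) ℝ := of fun i j => ∫ ω, cholMap (Lfac (Y ω)) i j ∂P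
  have hC : C.IsLowerTriangular := fun i j (hij : i < j) => by
    simp [C, cholMap_apply_of_lt _ hij]
  set μ := cholExp C * (cholExp C)ᵀ
  have hμ : μ.PosDef :=
    (cholExp_isLowerTriangular C).posDef_mul_transpose_s13 (cholExp_apply_self_pos C)
  have hLμ : Lfac μ = cholExp C :=
    IsLowerTriangular.eq_of_mul_transpose_eq_s13 (hLfac_lower μ hμ) (cholExp_isLowerTriangular C)
      (hLfac_diag μ hμ) (cholExp_apply_self_pos C) (hLfac_mul μ hμ).symm
  have hcholμ : cholMap (Lfac μ) = C := by rw [hLμ, cholMap_cholExp hC]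
  have hF_eq : ∀ S, F S = frobNorm (cholMap (Lfac S) - cholMap (Lfac μ)) ^ 2 + F μ := by
    intro S
    rw [hF, hF, integral_frobNorm_sub_sq hmeas hL2, integral_frobNorm_sub_sq hmeas hL2, hcholμ,
      sub_self, frobNorm_sq_eq_zero_iff.mpr rfl, zero_add]
  refine ⟨fun S _ => integrable_frobNorm_sub_sq hmeas hL2 _, μ, hμ, hcholμ,
    fun S _ => ?_, fun S hS hFS => ?_, fun S _ => by rw [hF_eq S]; ring⟩
  · rw [hF_eq S]
    exact le_add_of_nonneg_left (sq_nonneg _)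
  · have hchol : cholMap (Lfac S) = cholMap (Lfac μ) := by
      rw [← sub_eq_zero, ← frobNorm_sq_eq_zero_iff]
      linarith [hF_eq S]
    rw [hLfac_mul S hS, hLfac_mul μ hμ, eq_of_cholMap_eq (hLfac_lower S hS) (hLfac_lower μ hμ)
      (hLfac_diag S hS) (hLfac_diag μ hμ) hchol]

/-- Existence and uniqueness of the Fréchet mean under the log-Cholesky metric: if `Y` is a
random element of `Sym⁺(m)` with `chol(L(Y))` measurable and `E‖chol(L(Y))‖_F² < ∞`, then the
Fréchet function `F(S) := E[d_LC(S,Y)²]` is finite for every `S ∈ Sym⁺(m)` and has a unique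
minimizer `μ` over `Sym⁺(m)`, characterized by `chol(L(μ)) = E[chol(L(Y))]` (entrywise
expectation); moreover `F(S) − F(μ) = d_LC(S, μ)²` for every `S ∈ Sym⁺(m)`. -/
theorem logCholesky_frechet_mean (m : ℕ) (hm : 0 < m)
    (Lfac : Matrix (Fin m) (Fin m) ℝ → Matrix (Fin m) (Fin m) ℝ)
    (hLfac_lower : ∀ S : Matrix (Fin m) (Fin m) ℝ, S.PosDef →
      ∀ i j : Fin m, i < j → Lfac S i j = 0)
    (hLfac_diag : ∀ S : Matrix (Fin m) (Fin m) ℝ, S.PosDef → ∀ i : Fin m, 0 < Lfac S i i)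
    (hLfac_mul : ∀ S : Matrix (Fin m) (Fin m) ℝ, S.PosDef → S = Lfac S * (Lfac S)ᵀ)
    {Ω : Type*} [MeasurableSpace Ω] (P : Measure Ω) [IsProbabilityMeasure P]
    (Y : Ω → Matrix (Fin m) (Fin m) ℝ)
    (hYpd : ∀ ω, (Y ω).PosDef)
    (hmeas : ∀ i j : Fin m, Measurable fun ω => cholMap (Lfac (Y ω)) i j)
    (hL2 : Integrable (fun ω => (frobNorm (cholMap (Lfac (Y ω)))) ^ 2) P)
    (F : Matrix (Fin m) (Fin m) ℝ → ℝ)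
    (hF : ∀ S, F S = ∫ ω, (frobNorm (cholMap (Lfac S) - cholMap (Lfac (Y ω)))) ^ 2 ∂P) :
    -- F is finite on Sym⁺(m) (the defining integrand is integrable)
    (∀ S : Matrix (Fin m) (Fin m) ℝ, S.PosDef →
      Integrable (fun ω => (frobNorm (cholMap (Lfac S) - cholMap (Lfac (Y ω)))) ^ 2) P) ∧
    -- there is a unique minimizer μ of F over Sym⁺(m), characterized by
    -- chol(L(μ)) = E[chol(L(Y))], and F(S) − F(μ) = d_LC(S,μ)² for every S ∈ Sym⁺(m)
    (∃ μ : Matrix (Fin m) (Fin m) ℝ, μ.PosDef ∧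
      cholMap (Lfac μ) = (Matrix.of fun i j => ∫ ω, cholMap (Lfac (Y ω)) i j ∂P) ∧
      (∀ S : Matrix (Fin m) (Fin m) ℝ, S.PosDef → F μ ≤ F S) ∧
      (∀ S : Matrix (Fin m) (Fin m) ℝ, S.PosDef → F S = F μ → S = μ) ∧
      (∀ S : Matrix (Fin m) (Fin m) ℝ, S.PosDef →
        F S - F μ = (frobNorm (cholMap (Lfac S) - cholMap (Lfac μ))) ^ 2)) :=
  logCholesky_frechet_mean_general m Lfac hLfac_lower hLfac_diag hLfac_mul P Y hmeas hL2 F hF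
end
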